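/- (Lemma 3: geometric tracking error bound, deterministic errors.) Let A : ℝⁿ → ℝᵐ be a nonzero linear map with χ := σ_min/σ_max. For k ≥ 1 let f_k : ℝⁿ → ℝ be convex and differentiable with L-Lipschitz gradient, with minimizer set X_k* = {x : A x = u_k*} (u_k* in the range of A), ∇f_k vanishing on X_k*, and quadratic growth f_k(x) − f_k* ≥ (μ/2) dist(x, X_k*)², μ > 0. Fix ν ≥ 0, α > 0 with αL(1+ν)² < 1; set ℓ² := 1 − μα(1 − αL(1+ν)²) + 2ναL, assume 0 < ℓ < χ, and ζ := α(1+αL)/ℓ. Let x_1 ∈ ℝⁿ and x_{k+1} = x_k − α(∇f_k(x_k) + e_k) with errors ‖e_k‖ ≤ ε_k + ν‖∇f_k(x_k)‖ and ε_k ≤ ε. Suppose there exist x_k* ∈ X_k* with ‖x_{k+1}* − x_k*‖ ≤ σ_v for all k. Then for every k ≥ 1, dist(x_{k+1}, X_{k+1}*) ≤ (ℓ/χ)^k · dist(x_1, X_1*) + [(1 − (ℓ/χ)^k)/(1 − ℓ/χ)] · (σ_v + ζε)/χ. -/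

import Mathlib

/-!
Let `p` be the projection of `x_k` onto `X_k*`. Convexity, quadratic growth and the bound
`‖∇f(x)‖² ≤ 2L (f(x) - f*)` (the descent lemma at the minimizer `p`) give
`‖x_k - α ∇f_k(x_k) - p‖ + α ν ‖∇f_k(x_k)‖ ≤ ℓ ‖x_k - p‖`, so the relative part of the error is
absorbed and the absolute part costs `α ε_k`. Translating `p` by `x_{k+1}* - x_k*` lands in
`X_{k+1}*`, whence `d_{k+1} ≤ ℓ d_k + α ε_k + σ_v` for `d_k = dist(x_k, X_k*)`. As `σ_min ≤ ‖A‖`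
gives `χ ≤ 1`, this implies `d_{k+1} ≤ (ℓ/χ) d_k + (σ_v + ζ ε)/χ`, which unrolls into a
geometric series.
-/

open scoped RealInnerProductSpace Gradient
open Metric Set

section GradientDescent

variable {F : Type*} [NormedAddCommGroup F] [InnerProductSpace ℝ F] [CompleteSpace F] {f : F → ℝ}

theorem HasGradientAt.hasDerivAt_comp_lineMap {g x y : F} {t : ℝ}
    (h : HasGradientAt f g (AffineMap.lineMap x y t)) :
    HasDerivAt (f ∘ AffineMap.lineMap x y) ⟪g, y - x⟫ t :=
  h.hasFDerivAt.comp_hasDerivAt t AffineMap.hasDerivAt_lineMap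

theorem ConvexOn.add_inner_gradient_le {s : Set F} (hf : ConvexOn ℝ s f) {x y : F}
    (hx : x ∈ s) (hy : y ∈ s) (hfx : DifferentiableAt ℝ f x) :
    f x + ⟪∇ f x, y - x⟫ ≤ f y := by
  have hline := hf.comp_affineMap (AffineMap.lineMap x y)
  have hderiv : HasDerivAt (f ∘ AffineMap.lineMap x y) ⟪∇ f x, y - x⟫ (0 : ℝ) :=
    HasGradientAt.hasDerivAt_comp_lineMap (by simpa using hfx.hasGradientAt)
  have := hline.le_slope_of_hasDerivAt (x := 0) (y := 1) (by simpa using hx) (by simpa using hy)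
    zero_lt_one hderiv
  simp only [slope_def_field, Function.comp_apply, AffineMap.lineMap_apply_zero,
    AffineMap.lineMap_apply_one, sub_zero, div_one] at this
  linarith

theorem le_add_inner_gradient_add_sq (hf : Differentiable ℝ f) {L : ℝ}
    (hLip : ∀ u v, ‖∇ f u - ∇ f v‖ ≤ L * ‖u - v‖) (x y : F) :
    f y ≤ f x + ⟪∇ f x, y - x⟫ + L / 2 * ‖y - x‖ ^ 2 := by
  set φ : ℝ → ℝ := f ∘ AffineMap.lineMap x y
  have hφ : ∀ t, HasDerivAt φ ⟪∇ f (AffineMap.lineMap x y t), y - x⟫ t := fun t =>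
    HasGradientAt.hasDerivAt_comp_lineMap (hf _).hasGradientAt
  set B : ℝ → ℝ := fun t => f x + t * ⟪∇ f x, y - x⟫ + L / 2 * ‖y - x‖ ^ 2 * t ^ 2
  have hB : ∀ t, HasDerivAt B (⟪∇ f x, y - x⟫ + L * ‖y - x‖ ^ 2 * t) t := fun t => by
    refine ((((hasDerivAt_id t).mul_const _).const_add (f x)).add
      ((hasDerivAt_pow 2 t).const_mul (L / 2 * ‖y - x‖ ^ 2))).congr_deriv ?_
    ring
  have hslope : ∀ t ∈ Ico (0 : ℝ) 1,
      ⟪∇ f (AffineMap.lineMap x y t), y - x⟫ ≤ ⟪∇ f x, y - x⟫ + L * ‖y - x‖ ^ 2 * t := by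
    intro t ht
    have hlip := hLip (AffineMap.lineMap x y t) x
    rw [AffineMap.lineMap_apply_module', add_sub_cancel_right, norm_smul,
      Real.norm_of_nonneg ht.1] at hlip
    rw [AffineMap.lineMap_apply_module']
    calc ⟪∇ f (t • (y - x) + x), y - x⟫
        = ⟪∇ f x, y - x⟫ + ⟪∇ f (t • (y - x) + x) - ∇ f x, y - x⟫ := by
          rw [inner_sub_left]; ring
      _ ≤ ⟪∇ f x, y - x⟫ + ‖∇ f (t • (y - x) + x) - ∇ f x‖ * ‖y - x‖ := by
          gcongr; exact real_inner_le_norm _ _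
      _ ≤ ⟪∇ f x, y - x⟫ + L * (t * ‖y - x‖) * ‖y - x‖ := by gcongr
      _ = ⟪∇ f x, y - x⟫ + L * ‖y - x‖ ^ 2 * t := by ring
  have := image_le_of_deriv_right_le_deriv_boundary
    (fun t _ => (hφ t).continuousAt.continuousWithinAt) (fun t _ => (hφ t).hasDerivWithinAt)
    (by simp [φ, B]) (fun t _ => (hB t).continuousAt.continuousWithinAt)
    (fun t _ => (hB t).hasDerivWithinAt) hslope (right_mem_Icc.mpr zero_le_one)
  simpa [φ, B] using this

theorem IsMinOn.gradient_eq_zero {x : F} (h : IsMinOn f univ x) : ∇ f x = 0 := by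
  simp [gradient, (h.isLocalMin Filter.univ_mem).fderiv_eq_zero]

theorem sq_norm_gradient_le (hf : Differentiable ℝ f) {L : ℝ} (hL : 0 < L)
    (hLip : ∀ u v, ‖∇ f u - ∇ f v‖ ≤ L * ‖u - v‖) {p : F} (hp : IsMinOn f univ p) (x : F) :
    ‖∇ f x‖ ^ 2 ≤ 2 * L * (f x - f p) := by
  have hdesc := le_add_inner_gradient_add_sq hf hLip x (x - L⁻¹ • ∇ f x)
  rw [sub_sub_cancel_left, inner_neg_right, real_inner_smul_right, real_inner_self_eq_norm_sq,
    norm_neg, norm_smul, Real.norm_of_nonneg (inv_nonneg.mpr hL.le)] at hdesc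
  have hsq : L / 2 * (L⁻¹ * ‖∇ f x‖) ^ 2 = L⁻¹ * ‖∇ f x‖ ^ 2 / 2 := by
    field_simp
  have hmin : f p ≤ f (x - L⁻¹ • ∇ f x) := hp (mem_univ _)
  have : L⁻¹ * ‖∇ f x‖ ^ 2 ≤ 2 * (f x - f p) := by linarith
  calc ‖∇ f x‖ ^ 2 = L * (L⁻¹ * ‖∇ f x‖ ^ 2) := by field_simp
    _ ≤ 2 * L * (f x - f p) := by nlinarith

theorem norm_sub_smul_gradient_sub_add_le (hconv : ConvexOn ℝ univ f) (hf : Differentiable ℝ f)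
    {L : ℝ} (hL : 0 < L) (hLip : ∀ u v, ‖∇ f u - ∇ f v‖ ≤ L * ‖u - v‖) {p x : F}
    (hp : IsMinOn f univ p) {μ ν α ℓ : ℝ} (hμ : 0 ≤ μ) (hν : 0 ≤ ν) (hα : 0 ≤ α)
    (hstep : α * L * (1 + ν) ^ 2 < 1) (hℓ : 0 ≤ ℓ)
    (hℓsq : ℓ ^ 2 = 1 - μ * α * (1 - α * L * (1 + ν) ^ 2) + 2 * ν * α * L)
    (hqg : μ / 2 * ‖x - p‖ ^ 2 ≤ f x - f p) :
    ‖x - α • ∇ f x - p‖ + α * ν * ‖∇ f x‖ ≤ ℓ * ‖x - p‖ := by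
  set g := ∇ f x
  set D := ‖x - p‖
  set G := ‖g‖
  set N := ‖(x - p) - α • g‖
  have hGL : G ≤ L * D := by simpa [hp.gradient_eq_zero] using hLip x p
  have hGs : G ^ 2 ≤ 2 * L * (f x - f p) := sq_norm_gradient_le hf hL hLip hp x
  have hinner : f x - f p ≤ ⟪g, x - p⟫ := by
    have := hconv.add_inner_gradient_le (mem_univ x) (mem_univ p) (hf x)
    rw [← neg_sub x p, inner_neg_right] at this
    linarith
  have hs : 0 ≤ f x - f p := sub_nonneg.2 (hp (mem_univ x))
  have hNsq : N ^ 2 ≤ D ^ 2 - 2 * α * (1 - α * L) * (f x - f p) := by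
    have : N ^ 2 = D ^ 2 - 2 * α * ⟪g, x - p⟫ + α ^ 2 * G ^ 2 := by
      rw [norm_sub_sq_real, real_inner_smul_right,
        real_inner_comm, norm_smul, Real.norm_of_nonneg hα]
      ring
    nlinarith
  have hαLν : 0 ≤ α * L * ν := by positivity
  have hc : 0 ≤ 1 - α * L - α * L * ν ^ 2 := by nlinarith
  have hND : N ≤ D := by
    refine (pow_le_pow_iff_left₀ (norm_nonneg _) (norm_nonneg _) two_ne_zero).mp ?_
    nlinarith [mul_nonneg (mul_nonneg hα (by nlinarith : 0 ≤ 1 - α * L)) hs]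
  have hkey : (N + α * ν * G) ^ 2 ≤ (ℓ * D) ^ 2 := by
    rw [mul_pow, hℓsq]
    linarith [mul_le_mul_of_nonneg_left (mul_le_mul hGL hND (norm_nonneg _) (by positivity))
        (by positivity : 0 ≤ α * ν),
      mul_le_mul_of_nonneg_left hGs (by positivity : 0 ≤ α ^ 2 * ν ^ 2),
      mul_le_mul_of_nonneg_left hqg (by positivity : 0 ≤ 2 * α * (1 - α * L - α * L * ν ^ 2)),
      mul_nonneg (mul_nonneg (mul_nonneg hμ hα) (mul_nonneg (mul_nonneg hα hL.le) hν))
        (sq_nonneg D)]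
  rw [show x - α • g - p = (x - p) - α • g by abel]
  exact (pow_le_pow_iff_left₀ (by positivity) (by positivity) two_ne_zero).mp hkey

theorem norm_sub_smul_gradient_add_sub_le (hconv : ConvexOn ℝ univ f)
    (hf : Differentiable ℝ f) {L : ℝ} (hL : 0 < L) (hLip : ∀ u v, ‖∇ f u - ∇ f v‖ ≤ L * ‖u - v‖)
    {p x : F} (hp : IsMinOn f univ p) {μ ν α ℓ : ℝ} (hμ : 0 ≤ μ) (hν : 0 ≤ ν) (hα : 0 ≤ α)
    (hstep : α * L * (1 + ν) ^ 2 < 1) (hℓ : 0 ≤ ℓ)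
    (hℓsq : ℓ ^ 2 = 1 - μ * α * (1 - α * L * (1 + ν) ^ 2) + 2 * ν * α * L)
    (hqg : μ / 2 * ‖x - p‖ ^ 2 ≤ f x - f p) {e : F} {ε : ℝ} (he : ‖e‖ ≤ ε + ν * ‖∇ f x‖) :
    ‖x - α • (∇ f x + e) - p‖ ≤ ℓ * ‖x - p‖ + α * ε := by
  have hexact := norm_sub_smul_gradient_sub_add_le hconv hf hL hLip hp hμ hν hα hstep hℓ hℓsq hqg
  calc ‖x - α • (∇ f x + e) - p‖ = ‖(x - α • ∇ f x - p) - α • e‖ := by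
        rw [smul_add]; congr 1; abel
    _ ≤ ‖x - α • ∇ f x - p‖ + α * ‖e‖ := by
        refine (norm_sub_le _ _).trans_eq ?_
        rw [norm_smul, Real.norm_of_nonneg hα]
    _ ≤ ‖x - α • ∇ f x - p‖ + α * (ε + ν * ‖∇ f x‖) := by gcongr
    _ ≤ ℓ * ‖x - p‖ + α * ε := by linarith

theorem infDist_gradient_step_le [ProperSpace F] (hconv : ConvexOn ℝ univ f)
    (hf : Differentiable ℝ f) {L : ℝ} (hL : 0 < L) (hLip : ∀ u v, ‖∇ f u - ∇ f v‖ ≤ L * ‖u - v‖)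
    {X X' : Set F} (hX : IsClosed X) (hXne : X.Nonempty) {δ : F} (hshift : ∀ p ∈ X, p + δ ∈ X')
    {fstar : ℝ} (hfstar : ∀ p ∈ X, f p = fstar) {μ : ℝ} (hμ : 0 ≤ μ)
    (hQG : ∀ y, μ / 2 * infDist y X ^ 2 ≤ f y - fstar) {ν α ℓ : ℝ} (hν : 0 ≤ ν) (hα : 0 ≤ α)
    (hstep : α * L * (1 + ν) ^ 2 < 1) (hℓ : 0 ≤ ℓ)
    (hℓsq : ℓ ^ 2 = 1 - μ * α * (1 - α * L * (1 + ν) ^ 2) + 2 * ν * α * L)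
    {x e : F} {ε : ℝ} (he : ‖e‖ ≤ ε + ν * ‖∇ f x‖) :
    infDist (x - α • (∇ f x + e)) X' ≤ ℓ * infDist x X + (α * ε + ‖δ‖) := by
  obtain ⟨p, hp, hpx⟩ := hX.exists_infDist_eq_dist hXne x
  rw [dist_eq_norm] at hpx
  have hmin : IsMinOn f univ p := fun y _ => show f p ≤ f y by
    have := hQG y
    have : 0 ≤ μ / 2 * infDist y X ^ 2 := by positivity
    linarith [hfstar p hp]
  have hqg : μ / 2 * ‖x - p‖ ^ 2 ≤ f x - f p := hpx ▸ hfstar p hp ▸ hQG x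
  calc infDist (x - α • (∇ f x + e)) X'
      ≤ ‖(x - α • (∇ f x + e) - p) - δ‖ := by
        rw [sub_sub, ← dist_eq_norm]
        exact infDist_le_dist_of_mem (hshift p hp)
    _ ≤ ‖x - α • (∇ f x + e) - p‖ + ‖δ‖ := norm_sub_le _ _
    _ ≤ ℓ * ‖x - p‖ + α * ε + ‖δ‖ := by
        gcongr
        exact norm_sub_smul_gradient_add_sub_le hconv hf hL hLip hmin hμ hν hα hstep hℓ hℓsq hqg he
    _ = ℓ * infDist x X + (α * ε + ‖δ‖) := by rw [hpx]; ring

end GradientDescent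

theorem sInf_norm_apply_div_norm_le_opNorm {E G : Type*} [SeminormedAddCommGroup E]
    [SeminormedAddCommGroup G] [NormedSpace ℝ E] [NormedSpace ℝ G] (A : E →L[ℝ] G) (s : Set E) :
    sInf {c : ℝ | ∃ x, x ≠ 0 ∧ x ∈ s ∧ c = ‖A x‖ / ‖x‖} ≤ ‖A‖ := by
  rcases eq_empty_or_nonempty {c : ℝ | ∃ x, x ≠ 0 ∧ x ∈ s ∧ c = ‖A x‖ / ‖x‖} with hS | ⟨c, hc⟩
  · rw [hS, Real.sInf_empty]
    exact norm_nonneg A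
  · refine (csInf_le ⟨0, ?_⟩ hc).trans ?_
    · rintro _ ⟨x, -, -, rfl⟩
      positivity
    · obtain ⟨x, -, -, rfl⟩ := hc
      exact div_le_of_le_mul₀ (norm_nonneg x) (norm_nonneg A) (A.le_opNorm x)

theorem le_pow_mul_add_geom_sum_mul {d : ℕ → ℝ} {r C : ℝ} (hr : 0 ≤ r)
    (h : ∀ k, d (k + 1) ≤ r * d k + C) (k : ℕ) :
    d k ≤ r ^ k * d 0 + (∑ i ∈ Finset.range k, r ^ i) * C := by
  induction k with
  | zero => simp
  | succ k ih =>
    calc d (k + 1) ≤ r * (r ^ k * d 0 + (∑ i ∈ Finset.range k, r ^ i) * C) + C :=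
          (h k).trans (by gcongr)
      _ = r ^ (k + 1) * d 0 + (∑ i ∈ Finset.range (k + 1), r ^ i) * C := by
          rw [geom_sum_succ]; ring

theorem geometric_tracking_error_bound_general {n m : ℕ}
    (A : EuclideanSpace ℝ (Fin n) →L[ℝ] EuclideanSpace ℝ (Fin m))
    (σmin σmax χ : ℝ)
    (hσmin : σmin = sInf {c : ℝ | ∃ x : EuclideanSpace ℝ (Fin n),
      x ≠ 0 ∧ x ∈ (LinearMap.ker A.toLinearMap)ᗮ ∧ c = ‖A x‖ / ‖x‖})
    (hσmax : σmax = ‖A‖) (hχ : χ = σmin / σmax)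
    (f : ℕ → EuclideanSpace ℝ (Fin n) → ℝ)
    (hconv : ∀ k, ConvexOn ℝ Set.univ (f k)) (hdiff : ∀ k, Differentiable ℝ (f k))
    (L : ℝ) (hL : 0 < L)
    (hLip : ∀ k, ∀ u v : EuclideanSpace ℝ (Fin n),
      ‖gradient (f k) u - gradient (f k) v‖ ≤ L * ‖u - v‖)
    (ustar : ℕ → EuclideanSpace ℝ (Fin m))
    (Xstar : ℕ → Set (EuclideanSpace ℝ (Fin n)))
    (hXstar : ∀ k, Xstar k = {x | A x = ustar k})
    (fstar : ℕ → ℝ) (hfstar : ∀ k, ∀ x ∈ Xstar k, f k x = fstar k)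
    (μ : ℝ) (hμ : 0 < μ)
    (hQG : ∀ k, ∀ x : EuclideanSpace ℝ (Fin n),
      μ / 2 * Metric.infDist x (Xstar k) ^ 2 ≤ f k x - fstar k)
    (ε : ℕ → ℝ) (hεnn : ∀ k, 0 ≤ ε k) (εbar : ℝ) (hεbar : ∀ k, ε k ≤ εbar)
    (ν α : ℝ) (hν : 0 ≤ ν) (hα : 0 < α)
    (hstep : α * L * (1 + ν) ^ 2 < 1)
    (ℓ ζ : ℝ) (hℓpos : 0 < ℓ)
    (hℓsq : ℓ ^ 2 = 1 - μ * α * (1 - α * L * (1 + ν) ^ 2) + 2 * ν * α * L)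
    (hℓχ : ℓ < χ) (hζ : ζ = α * (1 + α * L) / ℓ)
    (x e : ℕ → EuclideanSpace ℝ (Fin n))
    (hrec : ∀ k, 1 ≤ k → x (k + 1) = x k - α • (gradient (f k) (x k) + e k))
    (herr : ∀ k, 1 ≤ k → ‖e k‖ ≤ ε k + ν * ‖gradient (f k) (x k)‖)
    (xstar : ℕ → EuclideanSpace ℝ (Fin n)) (hxstar : ∀ k, xstar k ∈ Xstar k)
    (σv : ℝ) (hσv : ∀ k, 1 ≤ k → ‖xstar (k + 1) - xstar k‖ ≤ σv) :
    ∀ k, 1 ≤ k →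
      Metric.infDist (x (k + 1)) (Xstar (k + 1)) ≤
        (ℓ / χ) ^ k * Metric.infDist (x 1) (Xstar 1) +
          (1 - (ℓ / χ) ^ k) / (1 - ℓ / χ) * ((σv + ζ * εbar) / χ) := by
  have hχ1 : χ ≤ 1 := hχ ▸ div_le_one_of_le₀
    (hσmin ▸ hσmax ▸ sInf_norm_apply_div_norm_le_opNorm A _) (hσmax ▸ norm_nonneg A)
  have hχ0 : 0 < χ := hℓpos.trans hℓχ
  have herr_le : ∀ k, α * ε k + σv ≤ (σv + ζ * εbar) / χ := by
    have hαζ : α ≤ ζ := by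
      rw [hζ, le_div_iff₀ hℓpos]
      nlinarith [hχ1, mul_pos hα hL]
    have hσv0 : 0 ≤ σv := (norm_nonneg _).trans (hσv 1 le_rfl)
    have hεbar0 : 0 ≤ εbar := (hεnn 0).trans (hεbar 0)
    refine fun k => le_trans ?_ (le_div_self ?_ hχ0 hχ1)
    · nlinarith [hεnn k, hεbar k]
    · exact add_nonneg hσv0 (mul_nonneg (hα.le.trans hαζ) hεbar0)
  have hdist_rec : ∀ k, infDist (x (k + 1 + 1)) (Xstar (k + 1 + 1)) ≤
      ℓ / χ * infDist (x (k + 1)) (Xstar (k + 1)) + (σv + ζ * εbar) / χ := by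
    intro k
    have hX : IsClosed (Xstar (k + 1)) := hXstar _ ▸ isClosed_eq A.continuous continuous_const
    have hshift : ∀ p ∈ Xstar (k + 1), p + (xstar (k + 2) - xstar (k + 1)) ∈ Xstar (k + 2) := by
      intro p hp
      simp only [hXstar, mem_ofPred_eq] at hp hxstar ⊢
      simp [hp, hxstar]
    rw [hrec _ k.succ_pos]
    refine (infDist_gradient_step_le (hconv _) (hdiff _) hL (hLip _) hX ⟨_, hxstar _⟩ hshift
      (hfstar _) hμ.le (hQG _) hν hα.le hstep hℓpos.le hℓsq (herr _ k.succ_pos)).trans ?_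
    gcongr
    · exact infDist_nonneg
    · exact le_div_self hℓpos.le hχ0 hχ1
    · linarith [hσv _ k.succ_pos, herr_le (k + 1)]
  intro k _
  have := le_pow_mul_add_geom_sum_mul (d := fun k => infDist (x (k + 1)) (Xstar (k + 1)))
    (div_nonneg hℓpos.le hχ0.le) hdist_rec k
  rwa [geom_sum_eq ((div_lt_one hχ0).mpr hℓχ).ne, ← neg_sub, ← neg_sub 1, neg_div_neg_eq] at this

/-- Lemma 3: geometric tracking error bound, deterministic errors:
`dist(x_{k+1}, X_{k+1}*) ≤ (ℓ/χ)^k dist(x_1, X_1*) + [(1 − (ℓ/χ)^k)/(1 − ℓ/χ)]·(σ_v + ζε)/χ`. -/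
theorem geometric_tracking_error_bound {n m : ℕ}
    (A : EuclideanSpace ℝ (Fin n) →L[ℝ] EuclideanSpace ℝ (Fin m)) (hA : A ≠ 0)
    (σmin σmax χ : ℝ)
    (hσmin : σmin = sInf {c : ℝ | ∃ x : EuclideanSpace ℝ (Fin n),
      x ≠ 0 ∧ x ∈ (LinearMap.ker A.toLinearMap)ᗮ ∧ c = ‖A x‖ / ‖x‖})
    (hσmax : σmax = ‖A‖) (hχ : χ = σmin / σmax)
    (f : ℕ → EuclideanSpace ℝ (Fin n) → ℝ)
    (hconv : ∀ k, ConvexOn ℝ Set.univ (f k)) (hdiff : ∀ k, Differentiable ℝ (f k))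
    (L : ℝ) (hL : 0 < L)
    (hLip : ∀ k, ∀ u v : EuclideanSpace ℝ (Fin n),
      ‖gradient (f k) u - gradient (f k) v‖ ≤ L * ‖u - v‖)
    (ustar : ℕ → EuclideanSpace ℝ (Fin m)) (hrange : ∀ k, ustar k ∈ Set.range A)
    (Xstar : ℕ → Set (EuclideanSpace ℝ (Fin n)))
    (hXstar : ∀ k, Xstar k = {x | A x = ustar k})
    (hXmin : ∀ k, Xstar k = {x | ∀ y : EuclideanSpace ℝ (Fin n), f k x ≤ f k y})
    (hgrad0 : ∀ k, ∀ y ∈ Xstar k, gradient (f k) y = 0)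
    (fstar : ℕ → ℝ) (hfstar : ∀ k, ∀ x ∈ Xstar k, f k x = fstar k)
    (μ : ℝ) (hμ : 0 < μ)
    (hQG : ∀ k, ∀ x : EuclideanSpace ℝ (Fin n),
      μ / 2 * Metric.infDist x (Xstar k) ^ 2 ≤ f k x - fstar k)
    (ε : ℕ → ℝ) (hεnn : ∀ k, 0 ≤ ε k) (εbar : ℝ) (hεbar : ∀ k, ε k ≤ εbar)
    (ν α : ℝ) (hν : 0 ≤ ν) (hα : 0 < α)
    (hstep : α * L * (1 + ν) ^ 2 < 1)
    (ℓ ζ : ℝ) (hℓpos : 0 < ℓ)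
    (hℓsq : ℓ ^ 2 = 1 - μ * α * (1 - α * L * (1 + ν) ^ 2) + 2 * ν * α * L)
    (hℓχ : ℓ < χ) (hζ : ζ = α * (1 + α * L) / ℓ)
    (x e : ℕ → EuclideanSpace ℝ (Fin n))
    (hrec : ∀ k, 1 ≤ k → x (k + 1) = x k - α • (gradient (f k) (x k) + e k))
    (herr : ∀ k, 1 ≤ k → ‖e k‖ ≤ ε k + ν * ‖gradient (f k) (x k)‖)
    (xstar : ℕ → EuclideanSpace ℝ (Fin n)) (hxstar : ∀ k, xstar k ∈ Xstar k)
    (σv : ℝ) (hσv : ∀ k, 1 ≤ k → ‖xstar (k + 1) - xstar k‖ ≤ σv) :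
    ∀ k, 1 ≤ k →
      Metric.infDist (x (k + 1)) (Xstar (k + 1)) ≤
        (ℓ / χ) ^ k * Metric.infDist (x 1) (Xstar 1) +
          (1 - (ℓ / χ) ^ k) / (1 - ℓ / χ) * ((σv + ζ * εbar) / χ) :=
  geometric_tracking_error_bound_general A σmin σmax χ hσmin hσmax hχ f hconv hdiff L hL hLip ustar
    Xstar hXstar fstar hfstar μ hμ hQG ε hεnn εbar hεbar ν α hν hα hstep ℓ ζ hℓpos hℓsq hℓχ hζ x e
    hrec herr xstar hxstar σv hσv
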